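/- Let N ≥ 2 and write N = 2r or N = 2r+1 with r an integer. An N×N skew-symmetric integer matrix B such that node 1 is a sink of B satisfies μ₁(B) = ρ B ρ⁻¹ if and only if there exist nonnegative integers m₁, …, m_r such that B = Σ_{k=1}^r m_k B_N^{(k)}. -/

import Mathlib

open Matrix

/-- The cyclic permutation matrix ρ: ρ_{i+1,i} = 1 (1-based), ρ_{1,N} = 1. -/
def rhoM (N : ℕ) : Matrix (Fin N) (Fin N) ℤ :=
  Matrix.of fun i j => if (i : ℕ) = ((j : ℕ) + 1) % N then 1 else 0

/-- The skew-rotation τ: equal to ρ except τ_{1,N} = −1. -/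
def tauM (N : ℕ) : Matrix (Fin N) (Fin N) ℤ :=
  Matrix.of fun i j =>
    if (i : ℕ) = ((j : ℕ) + 1) % N then (if (j : ℕ) + 1 = N then -1 else 1) else 0

/-- Fomin–Zelevinsky matrix mutation at node `k`. -/
def mutB {N : ℕ} (k : Fin N) (B : Matrix (Fin N) (Fin N) ℤ) : Matrix (Fin N) (Fin N) ℤ :=
  Matrix.of fun i j =>
    if i = k ∨ j = k then -B i j
    else B i j + (|B i k| * B k j + B i k * |B k j|) / 2

/-- Node `k` is a sink of `B` if all entries of column `k` are nonnegative. -/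
def IsSink {N : ℕ} (k : Fin N) (B : Matrix (Fin N) (Fin N) ℤ) : Prop :=
  ∀ i, 0 ≤ B i k


/-- The period 1 primitives: `B_N^(k) = τ^k − (τᵀ)^k`, except `B_{2r}^(r) = τ^r`. -/
def primM (N k : ℕ) : Matrix (Fin N) (Fin N) ℤ :=
  if 2 * k = N then (tauM N) ^ k else (tauM N) ^ k - ((tauM N)ᵀ) ^ k

/-!
When node 1 is a sink of the skew-symmetric matrix `B`, the correction term of `μ₁` vanishes, so
`μ₁ B = D B D` with `D = diag(-1, 1, …, 1)`. Since `τ = D ρ` and `ρ⁻¹ = ρᵀ`, the period 1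
condition `μ₁ B = ρ B ρ⁻¹` is equivalent to `τ B = B τ`. The primitives are polynomials in `τ` and
`τᵀ = τ⁻¹`, so they commute with `τ`. Conversely, `τ` maps each standard basis vector to ± the
next one, so a matrix commuting with `τ` is determined by its first column `(b_{i1})`. Comparing
the `(1,1)` entries of `τᵏ B = B τᵏ` and using skew-symmetry gives `b_{N+1-k,1} = b_{k+1,1}`, and
then `B = ∑ₖ b_{k+1,1} B_N^{(k)}`, with nonnegative coefficients because node 1 is a sink.
-/

theorem conj_eq_conj_iff_commute_mul {M : Type*} [Monoid M] {d u v b : M} (hd : d * d = 1)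
    (huv : u * v = 1) (hvu : v * u = 1) : d * b * d = u * b * v ↔ Commute (d * u) b := by
  constructor
  · intro h
    calc d * u * b = d * (u * b * v) * u := by simp only [mul_assoc, hvu, mul_one]
      _ = b * (d * u) := by simp only [← h, ← mul_assoc, hd, one_mul]
  · intro h
    calc d * b * d = d * (b * (d * u)) * v := by simp only [mul_assoc, huv, mul_one]
      _ = u * b * v := by rw [← h.eq]; simp only [← mul_assoc, hd, one_mul]

theorem Nat.add_one_mod_eq_ite {j N : ℕ} (h : j < N) :
    (j + 1) % N = if j + 1 = N then 0 else j + 1 := by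
  split_ifs with hj
  · rw [hj, Nat.mod_self]
  · exact Nat.mod_eq_of_lt (by omega)

theorem val_finRotate {N : ℕ} (j : Fin N) :
    (finRotate N j : ℕ) = if (j : ℕ) + 1 = N then (0 : ℕ) else (j : ℕ) + 1 := by
  obtain ⟨n, rfl⟩ := Nat.exists_eq_succ_of_ne_zero j.pos.ne'
  simp only [coe_finRotate, Fin.ext_iff, Fin.val_last, Nat.succ_eq_add_one, add_left_inj]

theorem Matrix.apply_eq_neg_of_transpose_eq_neg {n R : Type*} [Neg R] {B : Matrix n n R}
    (h : Bᵀ = -B) (i j : n) : B j i = -B i j :=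
  congrFun (congrFun h i) j

theorem Matrix.apply_self_eq_zero_of_transpose_eq_neg {n : Type*} {B : Matrix n n ℤ}
    (h : Bᵀ = -B) (i : n) : B i i = 0 := by
  have := apply_eq_neg_of_transpose_eq_neg h i i
  omega

def negAt {N : ℕ} (k : Fin N) : Matrix (Fin N) (Fin N) ℤ :=
  diagonal fun i => if i = k then -1 else 1

theorem negAt_mul_self {N : ℕ} (k : Fin N) : negAt k * negAt k = 1 := by
  rw [negAt, diagonal_mul_diagonal, ← diagonal_one]
  congr 1
  funext i
  split_ifs <;> norm_num

theorem negAt_transpose {N : ℕ} (k : Fin N) : (negAt k)ᵀ = negAt k :=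
  diagonal_transpose _

theorem mutB_eq_negAt_mul_mul_negAt {N : ℕ} {k : Fin N} {B : Matrix (Fin N) (Fin N) ℤ}
    (hskew : Bᵀ = -B) (hsink : IsSink k B) : mutB k B = negAt k * B * negAt k := by
  ext i j
  simp only [mutB, negAt, diagonal_mul, mul_diagonal, of_apply]
  by_cases hi : i = k <;> by_cases hj : j = k
  · simp [hi, hj, apply_self_eq_zero_of_transpose_eq_neg hskew]
  · simp [hi, hj]
  · simp [hi, hj]
  · have hcorr : |B i k| * B k j + B i k * |B k j| = 0 := by
      rw [apply_eq_neg_of_transpose_eq_neg hskew j k, abs_neg, abs_of_nonneg (hsink i),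
        abs_of_nonneg (hsink j)]
      ring
    simp [hi, hj, hcorr]

theorem rhoM_eq_permMatrix (N : ℕ) : rhoM N = Equiv.Perm.permMatrix ℤ (finRotate N).symm := by
  ext i j
  simp only [rhoM, of_apply, Equiv.Perm.permMatrix, PEquiv.toMatrix_apply, Equiv.toPEquiv_apply,
    Option.mem_def, Option.some_inj, Equiv.symm_apply_eq, Fin.ext_iff, val_finRotate,
    Nat.add_one_mod_eq_ite j.isLt]

theorem rhoM_mul_transpose (N : ℕ) : rhoM N * (rhoM N)ᵀ = 1 := by
  rw [rhoM_eq_permMatrix, transpose_permMatrix, ← permMatrix_mul, inv_mul_cancel,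
    permMatrix_one]

theorem tauM_eq_negAt_mul_rhoM {N : ℕ} (h0 : 0 < N) : tauM N = negAt ⟨0, h0⟩ * rhoM N := by
  ext i j
  simp only [tauM, rhoM, negAt, diagonal_mul, of_apply, Fin.ext_iff,
    Nat.add_one_mod_eq_ite j.isLt]
  split_ifs <;> omega

theorem tauM_mul_transpose (N : ℕ) : tauM N * (tauM N)ᵀ = 1 := by
  rcases N.eq_zero_or_pos with rfl | h0
  · exact Subsingleton.elim _ _
  rw [tauM_eq_negAt_mul_rhoM h0, transpose_mul, negAt_transpose, mul_assoc,
    ← mul_assoc (rhoM N), rhoM_mul_transpose, one_mul, negAt_mul_self]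

theorem commute_tauM_transpose (N : ℕ) : Commute (tauM N) (tauM N)ᵀ := by
  rw [Commute, SemiconjBy, tauM_mul_transpose, mul_eq_one_comm.mp (tauM_mul_transpose N)]

theorem mutB_eq_conj_rhoM_iff_commute {N : ℕ} (h0 : 0 < N) {B : Matrix (Fin N) (Fin N) ℤ}
    (hskew : Bᵀ = -B) (hsink : IsSink ⟨0, h0⟩ B) :
    mutB ⟨0, h0⟩ B = rhoM N * B * (rhoM N)⁻¹ ↔ Commute (tauM N) B := by
  rw [mutB_eq_negAt_mul_mul_negAt hskew hsink, inv_eq_right_inv (rhoM_mul_transpose N),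
    tauM_eq_negAt_mul_rhoM h0]
  exact conj_eq_conj_iff_commute_mul (negAt_mul_self _) (rhoM_mul_transpose N)
    (mul_eq_one_comm.mp (rhoM_mul_transpose N))

theorem commute_tauM_primM (N k : ℕ) : Commute (tauM N) (primM N k) := by
  unfold primM
  split_ifs
  · exact (Commute.refl _).pow_right k
  · exact ((Commute.refl _).pow_right k).sub_right ((commute_tauM_transpose N).pow_right k)

theorem commute_tauM_sum_primM (N : ℕ) (s : Finset ℕ) (m : ℕ → ℕ) :
    Commute (tauM N) (∑ k ∈ s, (m k : ℤ) • primM N k) :=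
  Commute.sum_right _ _ _ fun k _ => (commute_tauM_primM N k).smul_right _

theorem mul_tauM_apply {N : ℕ} (X : Matrix (Fin N) (Fin N) ℤ) (i j : Fin N) :
    (X * tauM N) i j = X i (finRotate N j) * if (j : ℕ) + 1 = N then -1 else 1 := by
  rw [tauM_eq_negAt_mul_rhoM j.pos, ← mul_assoc, rhoM_eq_permMatrix, Equiv.Perm.permMatrix,
    PEquiv.mul_toMatrix_toPEquiv, submatrix_apply, Equiv.symm_symm, id, negAt, mul_diagonal]
  simp only [Fin.ext_iff, val_finRotate]
  by_cases h : (j : ℕ) + 1 = N <;> simp [h]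

theorem tauM_pow_apply {N k : ℕ} (hk : k < N) (i j : Fin N) :
    (tauM N ^ k) i j =
      if (i : ℕ) = j + k then 1 else if (i : ℕ) + N = j + k then -1 else 0 := by
  induction k generalizing j with
  | zero => simp only [pow_zero, one_apply, Fin.ext_iff]; split_ifs <;> omega
  | succ k ih =>
    rw [pow_succ, mul_tauM_apply, ih (by omega), val_finRotate]
    split_ifs <;> omega

theorem eq_zero_of_commute_tauM {N : ℕ} (h0 : 0 < N) {X : Matrix (Fin N) (Fin N) ℤ}
    (hX : Commute (tauM N) X) (hcol : ∀ i, X i ⟨0, h0⟩ = 0) : X = 0 := by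
  suffices h : ∀ j (hj : j < N) i, X i ⟨j, hj⟩ = 0 from ext fun i j => h j j.isLt i
  intro j
  induction j with
  | zero => exact fun _ => hcol
  | succ j ih =>
    intro hj i
    have hshift : finRotate N ⟨j, by omega⟩ = ⟨j + 1, hj⟩ := by
      rw [Fin.ext_iff, val_finRotate, if_neg (by simp; omega)]
    have hτX : (tauM N * X) i ⟨j, by omega⟩ = 0 := by
      rw [mul_apply]; exact Finset.sum_eq_zero fun l _ => by rw [ih (by omega) l, mul_zero]
    simpa [hX.eq, mul_tauM_apply, hshift, show j + 1 ≠ N by omega] using hτX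

theorem apply_sub_zero_eq_of_commute_tauM {N : ℕ} (h0 : 0 < N) {B : Matrix (Fin N) (Fin N) ℤ}
    (hskew : Bᵀ = -B) (hB : Commute (tauM N) B) {k : ℕ} (hk0 : 0 < k) (hk : k < N) :
    B ⟨N - k, by omega⟩ ⟨0, h0⟩ = B ⟨k, hk⟩ ⟨0, h0⟩ := by
  have hcomm := congrFun (congrFun (hB.pow_left k).eq ⟨0, h0⟩) ⟨0, h0⟩
  have hrow : (tauM N ^ k * B) ⟨0, h0⟩ ⟨0, h0⟩ = -B ⟨N - k, by omega⟩ ⟨0, h0⟩ := by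
    rw [mul_apply, Finset.sum_eq_single ⟨N - k, by omega⟩]
    · rw [tauM_pow_apply hk, if_neg (by simp; omega), if_pos (by simp; omega), neg_one_mul]
    · intro l _ hl
      have := Fin.val_ne_of_ne hl
      rw [tauM_pow_apply hk, if_neg (by simp; omega), if_neg (by simp at this ⊢; omega), zero_mul]
    · simp
  have hcol : (B * tauM N ^ k) ⟨0, h0⟩ ⟨0, h0⟩ = B ⟨0, h0⟩ ⟨k, hk⟩ := by
    rw [mul_apply, Finset.sum_eq_single ⟨k, hk⟩]
    · rw [tauM_pow_apply hk, if_pos (by simp), mul_one]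
    · intro l _ hl
      have := Fin.val_ne_of_ne hl
      rw [tauM_pow_apply hk, if_neg (by simp at this ⊢; omega), if_neg (by simp; omega), mul_zero]
    · simp
  have hs := apply_eq_neg_of_transpose_eq_neg hskew ⟨0, h0⟩ ⟨k, hk⟩
  linarith

theorem primM_apply_zero {N k : ℕ} (hk1 : 1 ≤ k) (hk2 : 2 * k ≤ N) (i : Fin N) :
    primM N k i ⟨0, by omega⟩ = if (i : ℕ) ≠ 0 ∧ min (i : ℕ) (N - i) = k then 1 else 0 := by
  by_cases h : 2 * k = N
  · rw [primM, if_pos h, tauM_pow_apply (by omega)]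
    dsimp only
    split_ifs <;> omega
  · rw [primM, if_neg h, Matrix.sub_apply, ← transpose_pow, transpose_apply,
      tauM_pow_apply (by omega), tauM_pow_apply (by omega)]
    dsimp only
    split_ifs <;> omega

theorem sum_primM_apply_zero {N : ℕ} (h0 : 0 < N) (m : ℕ → ℕ) (i : Fin N) :
    (∑ k ∈ Finset.Icc 1 (N / 2), (m k : ℤ) • primM N k) i ⟨0, h0⟩ =
      if (i : ℕ) = 0 then 0 else (m (min (i : ℕ) (N - i)) : ℤ) := by
  have hterm : ∀ k ∈ Finset.Icc 1 (N / 2), ((m k : ℤ) • primM N k) i ⟨0, h0⟩ =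
      if (i : ℕ) ≠ 0 ∧ min (i : ℕ) (N - i) = k then (m k : ℤ) else 0 := by
    intro k hk
    rw [Finset.mem_Icc] at hk
    rw [Matrix.smul_apply, primM_apply_zero hk.1 (by omega), smul_eq_mul, mul_ite, mul_one,
      mul_zero]
  rw [Matrix.sum_apply, Finset.sum_congr rfl hterm]
  split_ifs with hi
  · simp [hi]
  · simp only [ne_eq, hi, not_false_eq_true, true_and]
    rw [Finset.sum_ite_eq, if_pos (Finset.mem_Icc.mpr ⟨by omega, by omega⟩)]

theorem exists_eq_sum_primM_of_commute {N : ℕ} (h0 : 0 < N) {B : Matrix (Fin N) (Fin N) ℤ}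
    (hskew : Bᵀ = -B) (hsink : IsSink ⟨0, h0⟩ B) (hB : Commute (tauM N) B) :
    ∃ m : ℕ → ℕ, B = ∑ k ∈ Finset.Icc 1 (N / 2), (m k : ℤ) • primM N k := by
  -- `% N` only makes the index a valid `Fin N`; it is used for `k ≤ N / 2`
  refine ⟨fun k => (B ⟨k % N, Nat.mod_lt _ h0⟩ ⟨0, h0⟩).toNat, ?_⟩
  rw [← sub_eq_zero]
  refine eq_zero_of_commute_tauM h0 (hB.sub_right (commute_tauM_sum_primM N _ _)) fun i => ?_
  rw [Matrix.sub_apply, sum_primM_apply_zero, sub_eq_zero]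
  split_ifs with hi
  · rw [show (⟨0, h0⟩ : Fin N) = i from Fin.ext hi.symm,
      apply_self_eq_zero_of_transpose_eq_neg hskew]
  · rw [Int.toNat_of_nonneg (hsink _)]
    have hmin : min (i : ℕ) (N - i) % N = min (i : ℕ) (N - i) := Nat.mod_eq_of_lt (by omega)
    simp only [hmin]
    rcases le_total (i : ℕ) (N - i) with h | h
    · simp only [min_eq_left h]
    · simp only [min_eq_right h]
      exact (apply_sub_zero_eq_of_commute_tauM h0 hskew hB (by omega) i.isLt).symm

/-- Classification of period 1 sink-type quivers: with node 1 a sink, `B` is period 1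
iff it is a nonnegative integer combination of the period 1 primitives. -/
theorem stmt1 (N : ℕ) (hN : 2 ≤ N) (B : Matrix (Fin N) (Fin N) ℤ)
    (hskew : Bᵀ = -B) (hsink : IsSink ⟨0, by omega⟩ B) :
    mutB ⟨0, by omega⟩ B = rhoM N * B * (rhoM N)⁻¹ ↔
      ∃ m : ℕ → ℕ, B = ∑ k ∈ Finset.Icc 1 (N / 2), (m k : ℤ) • primM N k := by
  rw [mutB_eq_conj_rhoM_iff_commute (by omega) hskew hsink]
  constructor
  · exact exists_eq_sum_primM_of_commute (by omega) hskew hsink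
  · rintro ⟨m, rfl⟩
    exact commute_tauM_sum_primM N _ m
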